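/- Let C_1,…,C_m (m ≥ 2) be real full-row-rank matrices with n columns, K_i = kernel(C_i), P_i = C_iᵀ(C_iC_iᵀ)^{−1}C_i, and let M be the mn×mn block matrix whose i-th diagonal block is I_n − (1/2)P_i, whose (i, i−1) block (indices mod m) is (1/2)P_i, and whose remaining blocks are zero. If the weighted m-vertex directed cycle is well-configured (equivalently, {K_i : K_i ≠ {0}} is an independent family), then the eigenvalue 1 of M has algebraic multiplicity exactly n; in particular kernel(I − M)² = kernel(I − M), i.e., every Jordan block of M for the eigenvalue 1 has size 1. -/

import Mathlib

/-!
Write `dᵢ = xᵢ - xᵢ₋₁` (indices mod `m`). Since `ker Pᵢ = ker Cᵢ`, the kernel of `I - M` is cut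
out by `Cᵢ dᵢ = 0`, so well-configuredness makes it the consensus subspace `{(c, …, c)}` of
dimension `n`. If `(I - M)² x = 0`, then `(I - M) x = (c, …, c)`, i.e. `Pᵢ dᵢ = 2c` for every `i`.
As `Pᵢ` is an orthogonal projection, `⟪c, dᵢ⟫ = ½ ⟪Pᵢ dᵢ, dᵢ⟫ = ½ ‖Pᵢ dᵢ‖² = 2‖c‖²`, and summing
over the cycle, where `∑ dᵢ = 0`, gives `c = 0`. Hence `ker (I - M)² = ker (I - M)`: the
generalized eigenspace of `1` is the eigenspace, and its dimension `n` is the algebraic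
multiplicity.
-/

open Matrix

/-- The `mn × mn` stacked update matrix of the cycle iteration
`x i (t+1) = x i t − (1/2) P i (x i t − x (i-1) t)` (indices mod `m`): its `i`-th diagonal
block is `I − (1/2) P i`, its `(i, i-1)` block is `(1/2) P i`, and all other blocks vanish. -/
noncomputable def cycM (m n : ℕ) [NeZero m] (P : Fin m → Matrix (Fin n) (Fin n) ℝ) :
    Matrix (Fin m × Fin n) (Fin m × Fin n) ℝ :=
  Matrix.of fun p q =>
    (if q.1 = p.1 then ((1 : Matrix (Fin n) (Fin n) ℝ) - (1 / 2 : ℝ) • P p.1) p.2 q.2 else 0) +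
    (if q.1 = p.1 - 1 then ((1 / 2 : ℝ) • P p.1) p.2 q.2 else 0)

namespace Matrix

variable {ι ν K : Type*} [Fintype ν]

theorem ker_mulVecLin_neg [CommRing K] (B : Matrix ι ν K) :
    LinearMap.ker (-B).mulVecLin = LinearMap.ker B.mulVecLin := by
  ext x
  simp only [LinearMap.mem_ker, mulVecLin_apply, neg_mulVec, neg_eq_zero]

theorem mulVec_dotProduct_self_of_idempotent [CommSemiring K] {Q : Matrix ν ν K} (hQ : Qᵀ = Q)
    (hQQ : Q * Q = Q) (d : ν → K) : Q *ᵥ d ⬝ᵥ d = Q *ᵥ d ⬝ᵥ Q *ᵥ d := by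
  have hvecMul : (Q *ᵥ d) ᵥ* Q = Q *ᵥ d := by
    calc (Q *ᵥ d) ᵥ* Q = (Q *ᵥ d) ᵥ* Qᵀ := by rw [hQ]
      _ = Q *ᵥ d := by rw [vecMul_transpose, mulVec_mulVec, hQQ]
  rw [dotProduct_mulVec, hvecMul]

theorem eq_zero_of_idempotent_mulVec_eq [Fintype ι] [Nonempty ι] [Field K] [LinearOrder K]
    [IsStrictOrderedRing K] {Q : ι → Matrix ν ν K} (hQ : ∀ i, (Q i)ᵀ = Q i)
    (hQQ : ∀ i, Q i * Q i = Q i) {d : ι → ν → K} (hd : ∑ i, d i = 0) {c : ν → K}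
    (hc : ∀ i, Q i *ᵥ d i = c) : c = 0 := by
  have hcd : ∀ i, c ⬝ᵥ d i = c ⬝ᵥ c := fun i => by
    rw [← hc i, mulVec_dotProduct_self_of_idempotent (hQ i) (hQQ i)]
  have hsum : (Fintype.card ι : K) * (c ⬝ᵥ c) = 0 :=
    calc (Fintype.card ι : K) * (c ⬝ᵥ c) = ∑ i, c ⬝ᵥ d i := by simp [hcd]
      _ = c ⬝ᵥ ∑ i, d i := (dotProduct_sum c _ d).symm
      _ = 0 := by rw [hd, dotProduct_zero]
  exact dotProduct_self_eq_zero.mp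
    ((mul_eq_zero.mp hsum).resolve_left (Nat.cast_ne_zero.mpr Fintype.card_ne_zero))

variable [Fintype ι] [DecidableEq ι] [Field K]

theorem isUnit_of_rank_eq_card {A : Matrix ι ι K} (h : A.rank = Fintype.card ι) : IsUnit A := by
  rw [← mulVec_surjective_iff_isUnit, ← coe_mulVecLin, ← LinearMap.range_eq_top]
  exact Submodule.eq_top_of_finrank_eq (by rw [← rank, h, Module.finrank_fintype_fun_eq_card])

theorem rootMultiplicity_charpoly_eq_finrank_ker (A : Matrix ι ι K) (μ : K)
    (h : LinearMap.ker ((A - μ • 1) * (A - μ • 1)).mulVecLin =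
      LinearMap.ker (A - μ • 1).mulVecLin) :
    A.charpoly.rootMultiplicity μ = Module.finrank K (LinearMap.ker (A - μ • 1).mulVecLin) := by
  set B := A - μ • 1
  have hker : ∀ k, LinearMap.ker (B.toLin' ^ (k + 1)) = LinearMap.ker B.mulVecLin := fun k => by
    have h1 : LinearMap.ker (B.toLin' ^ 1) = LinearMap.ker (B.toLin' ^ 2) := by
      rw [pow_one, ← toLin'_pow, sq, toLin'_apply', toLin'_apply', h]
    rw [add_comm, ← Module.End.ker_pow_constant h1 k, pow_one, toLin'_apply']
  have hmax : Module.End.maxGenEigenspace A.toLin' μ = LinearMap.ker B.mulVecLin := by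
    ext x
    rw [Module.End.mem_maxGenEigenspace,
      show A.toLin' - μ • 1 = B.toLin' by rw [map_sub, map_smul, toLin'_one]; rfl]
    refine ⟨fun ⟨k, hk⟩ => ?_, fun hx => ⟨1, by simpa using hx⟩⟩
    cases k with
    | zero => exact (show x = 0 from hk) ▸ zero_mem _
    | succ k => rwa [← hker k]
  rw [← charpoly_toLin', ← LinearMap.finrank_maxGenEigenspace_eq, hmax]

/-- The orthogonal projection onto the row space of `C` when `C` has full row rank; otherwise
`(C * Cᵀ)⁻¹` is the junk value `0`. -/
noncomputable def rowSpaceProj (C : Matrix ι ν K) : Matrix ν ν K := Cᵀ * (C * Cᵀ)⁻¹ * C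

theorem transpose_rowSpaceProj (C : Matrix ι ν K) : (rowSpaceProj C)ᵀ = rowSpaceProj C := by
  rw [rowSpaceProj, transpose_mul, transpose_mul, transpose_nonsing_inv, transpose_mul,
    transpose_transpose, Matrix.mul_assoc]

variable [LinearOrder K] [IsStrictOrderedRing K]

theorem isUnit_det_mul_transpose {C : Matrix ι ν K} (h : C.rank = Fintype.card ι) :
    IsUnit (C * Cᵀ).det :=
  (isUnit_iff_isUnit_det _).mp (isUnit_of_rank_eq_card (by rw [rank_self_mul_transpose, h]))

theorem mul_rowSpaceProj {C : Matrix ι ν K} (h : C.rank = Fintype.card ι) :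
    C * rowSpaceProj C = C := by
  rw [rowSpaceProj, ← Matrix.mul_assoc, ← Matrix.mul_assoc,
    mul_nonsing_inv _ (isUnit_det_mul_transpose h), Matrix.one_mul]

theorem rowSpaceProj_mul_self {C : Matrix ι ν K} (h : C.rank = Fintype.card ι) :
    rowSpaceProj C * rowSpaceProj C = rowSpaceProj C := by
  calc rowSpaceProj C * rowSpaceProj C = Cᵀ * (C * Cᵀ)⁻¹ * (C * rowSpaceProj C) :=
        Matrix.mul_assoc _ _ _
    _ = rowSpaceProj C := by rw [mul_rowSpaceProj h, rowSpaceProj]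

theorem rowSpaceProj_mulVec_eq_zero_iff {C : Matrix ι ν K} (h : C.rank = Fintype.card ι)
    (v : ν → K) : rowSpaceProj C *ᵥ v = 0 ↔ C *ᵥ v = 0 := by
  refine ⟨fun hv => ?_, fun hv => ?_⟩
  · rw [← mul_rowSpaceProj h, ← mulVec_mulVec, hv, mulVec_zero]
  · rw [rowSpaceProj, ← mulVec_mulVec, hv, mulVec_zero]

end Matrix

theorem Fin.sum_sub_sub_one {m : ℕ} [NeZero m] {V : Type*} [AddCommGroup V] (y : Fin m → V) :
    ∑ i, (y i - y (i - 1)) = 0 := by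
  rw [Finset.sum_sub_distrib, sub_eq_zero]
  exact (Equiv.subRight 1).sum_comp y |>.symm

section Cycle

variable {m n : ℕ} [NeZero m]

def IsWellConfigured {κ : Fin m → Type*} [∀ i, Fintype (κ i)]
    (C : ∀ i, Matrix (κ i) (Fin n) ℝ) : Prop :=
  ∀ y : Fin m → Fin n → ℝ, (∀ i, C i *ᵥ (y i - y (i - 1)) = 0) → ∀ i j, y i = y j

theorem curry_one_sub_cycM_mulVec (P : Fin m → Matrix (Fin n) (Fin n) ℝ)
    (x : Fin m × Fin n → ℝ) (i : Fin m) :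
    Function.curry ((1 - cycM m n P) *ᵥ x) i =
      (1 / 2 : ℝ) • (P i *ᵥ (Function.curry x i - Function.curry x (i - 1))) := by
  ext a
  simp only [Function.curry_apply, sub_mulVec, one_mulVec, Pi.sub_apply, Pi.smul_apply,
    mulVec, dotProduct, cycM, of_apply, add_mul, ite_mul, zero_mul, Finset.sum_add_distrib,
    Fintype.sum_prod_type_right, Finset.sum_ite_eq', Finset.mem_univ, if_true]
  simp only [Matrix.sub_apply, Matrix.smul_apply, one_apply, smul_eq_mul, sub_mul, mul_sub,
    Finset.sum_sub_distrib, ite_mul, one_mul, zero_mul, Finset.sum_ite_eq, Finset.mem_univ, if_true,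
    Finset.mul_sum, mul_assoc]
  ring

theorem one_sub_cycM_mulVec_eq_zero_iff (P : Fin m → Matrix (Fin n) (Fin n) ℝ)
    (x : Fin m × Fin n → ℝ) :
    (1 - cycM m n P) *ᵥ x = 0 ↔
      ∀ i, P i *ᵥ (Function.curry x i - Function.curry x (i - 1)) = 0 := by
  have hzero : ∀ y : Fin m × Fin n → ℝ, y = 0 ↔ ∀ i, Function.curry y i = 0 :=
    fun y => ⟨fun h i => by rw [h]; rfl, fun h => funext fun p => congrFun (h p.1) p.2⟩
  simp only [hzero, curry_one_sub_cycM_mulVec, smul_eq_zero, one_div, inv_eq_zero,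
    two_ne_zero, false_or]

variable {P : Fin m → Matrix (Fin n) (Fin n) ℝ}

theorem ker_one_sub_cycM (hP : IsWellConfigured P) :
    LinearMap.ker (1 - cycM m n P).mulVecLin =
      LinearMap.range (LinearMap.funLeft ℝ ℝ (Prod.snd : Fin m × Fin n → Fin n)) := by
  ext x
  rw [LinearMap.mem_ker, mulVecLin_apply, LinearMap.mem_range, one_sub_cycM_mulVec_eq_zero_iff]
  constructor
  · intro hx
    exact ⟨Function.curry x 0, funext fun p => congrFun (hP _ hx 0 p.1) p.2⟩
  · rintro ⟨c, rfl⟩ i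
    change P i *ᵥ (c - c) = 0
    rw [sub_self, mulVec_zero]

theorem finrank_ker_one_sub_cycM (hP : IsWellConfigured P) :
    Module.finrank ℝ (LinearMap.ker (1 - cycM m n P).mulVecLin) = n := by
  rw [ker_one_sub_cycM hP, LinearMap.finrank_range_of_inj
    (LinearMap.funLeft_injective_of_surjective ℝ ℝ _ Prod.snd_surjective),
    Module.finrank_fintype_fun_eq_card, Fintype.card_fin]

theorem ker_one_sub_cycM_mul_self (hsymm : ∀ i, (P i)ᵀ = P i) (hidem : ∀ i, P i * P i = P i)
    (hP : IsWellConfigured P) :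
    LinearMap.ker ((1 - cycM m n P) * (1 - cycM m n P)).mulVecLin =
      LinearMap.ker (1 - cycM m n P).mulVecLin := by
  ext x
  simp only [LinearMap.mem_ker, mulVecLin_apply, ← mulVec_mulVec]
  refine ⟨fun hx => ?_, fun hx => by rw [hx, mulVec_zero]⟩
  obtain ⟨c, hc⟩ : (1 - cycM m n P) *ᵥ x ∈
      LinearMap.range (LinearMap.funLeft ℝ ℝ (Prod.snd : Fin m × Fin n → Fin n)) := by
    rw [← ker_one_sub_cycM hP]
    exact hx
  have hproj : ∀ i, P i *ᵥ (Function.curry x i - Function.curry x (i - 1)) = (2 : ℝ) • c := by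
    intro i
    have h := curry_one_sub_cycM_mulVec P x i
    rw [← hc] at h
    change c = _ at h
    rw [h, smul_smul]
    norm_num
  have hc0 : (2 : ℝ) • c = 0 :=
    eq_zero_of_idempotent_mulVec_eq hsymm hidem (Fin.sum_sub_sub_one _) hproj
  rw [← hc, (smul_eq_zero_iff_right two_ne_zero).mp hc0, map_zero]

end Cycle

theorem stmt_18_general (m n : ℕ) [NeZero m] (k : Fin m → ℕ)
    (C : (i : Fin m) → Matrix (Fin (k i)) (Fin n) ℝ)
    (hrank : ∀ i, (C i).rank = k i)
    (hwc : ∀ y : Fin m → (Fin n → ℝ),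
      (∀ i : Fin m, (C i).mulVec (y i - y (i - 1)) = 0) → ∀ i j, y i = y j) :
    Polynomial.rootMultiplicity (1 : ℝ)
      (cycM m n (fun i => (C i)ᵀ * (C i * (C i)ᵀ)⁻¹ * C i)).charpoly = n ∧
    LinearMap.ker ((((1 : Matrix (Fin m × Fin n) (Fin m × Fin n) ℝ) -
          cycM m n (fun i => (C i)ᵀ * (C i * (C i)ᵀ)⁻¹ * C i)) *
        ((1 : Matrix (Fin m × Fin n) (Fin m × Fin n) ℝ) -
          cycM m n (fun i => (C i)ᵀ * (C i * (C i)ᵀ)⁻¹ * C i))).mulVecLin) =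
    LinearMap.ker (((1 : Matrix (Fin m × Fin n) (Fin m × Fin n) ℝ) -
        cycM m n (fun i => (C i)ᵀ * (C i * (C i)ᵀ)⁻¹ * C i)).mulVecLin) := by
  simp only [← rowSpaceProj.eq_1]
  have hfull : ∀ i, (C i).rank = Fintype.card (Fin (k i)) := by simpa using hrank
  have hP : IsWellConfigured fun i => rowSpaceProj (C i) := fun y hy =>
    hwc y fun i => (rowSpaceProj_mulVec_eq_zero_iff (hfull i) _).mp (hy i)
  have hker := ker_one_sub_cycM_mul_self (fun i => transpose_rowSpaceProj (C i))
    (fun i => rowSpaceProj_mul_self (hfull i)) hP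
  refine ⟨?_, hker⟩
  have hsign : cycM m n (fun i => rowSpaceProj (C i)) - (1 : ℝ) • 1 =
      -(1 - cycM m n (fun i => rowSpaceProj (C i))) := by
    rw [one_smul, neg_sub]
  rw [rootMultiplicity_charpoly_eq_finrank_ker _ 1
    (by rwa [hsign, neg_mul_neg, ker_mulVecLin_neg]), hsign, ker_mulVecLin_neg,
    finrank_ker_one_sub_cycM hP]

/-- For full-row-rank matrices `C i` with `n` columns, `Pᵢ = Cᵢᵀ(CᵢCᵢᵀ)⁻¹Cᵢ` and
the corresponding cycle update matrix `M`, if the weighted cycle is well-configured, then the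
eigenvalue `1` of `M` has algebraic multiplicity exactly `n`, and
`ker (I − M)² = ker (I − M)` (all Jordan blocks for the eigenvalue `1` have size `1`). -/
theorem stmt_18 (m n : ℕ) [NeZero m] (hm : 2 ≤ m) (k : Fin m → ℕ)
    (C : (i : Fin m) → Matrix (Fin (k i)) (Fin n) ℝ)
    (hrank : ∀ i, (C i).rank = k i)
    (hwc : ∀ y : Fin m → (Fin n → ℝ),
      (∀ i : Fin m, (C i).mulVec (y i - y (i - 1)) = 0) → ∀ i j, y i = y j) :
    Polynomial.rootMultiplicity (1 : ℝ)
      (cycM m n (fun i => (C i)ᵀ * (C i * (C i)ᵀ)⁻¹ * C i)).charpoly = n ∧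
    LinearMap.ker ((((1 : Matrix (Fin m × Fin n) (Fin m × Fin n) ℝ) -
          cycM m n (fun i => (C i)ᵀ * (C i * (C i)ᵀ)⁻¹ * C i)) *
        ((1 : Matrix (Fin m × Fin n) (Fin m × Fin n) ℝ) -
          cycM m n (fun i => (C i)ᵀ * (C i * (C i)ᵀ)⁻¹ * C i))).mulVecLin) =
    LinearMap.ker (((1 : Matrix (Fin m × Fin n) (Fin m × Fin n) ℝ) -
        cycM m n (fun i => (C i)ᵀ * (C i * (C i)ᵀ)⁻¹ * C i)).mulVecLin) :=
  stmt_18_general m n k C hrank hwc
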